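/- Let E be a finite-dimensional real inner product space of dimension n ≥ 1, let k ≥ 1 be a natural number, let m > 0 be real, and let ρ > 0 be a real constant. There do not exist smooth functions f, h : E → ℝ with f > 0 everywhere such that: (i) Hess h(x)(w,w) − (1/m)⟨∇h(x), w⟩² ≥ 0 for all x and all w ∈ E, and (ii) ρ·f(x)² + f(x)·Δf(x) + (k−1)·‖∇f(x)‖² − f(x)·⟨∇h(x), ∇f(x)⟩ = 0 for all x ∈ E. -/

import Mathlib

open scoped BigOperators
open Module

variable {E : Type*} [NormedAddCommGroup E] [InnerProductSpace ℝ E] [FiniteDimensional ℝ E]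

/-- The Laplacian of `f : E → ℝ`: the trace of the second derivative, computed as the sum
of the diagonal entries of the second derivative in an orthonormal basis. -/
noncomputable def laplacian (f : E → ℝ) (x : E) : ℝ :=
  ∑ i, iteratedFDeriv ℝ 2 f x ![stdOrthonormalBasis ℝ E i, stdOrthonormalBasis ℝ E i]

/-- The drifting (Bakry–Émery) Laplacian `Δ_h f = Δ f − ⟨∇h, ∇f⟩`. -/
noncomputable def driftLaplacian (h f : E → ℝ) (x : E) : ℝ :=
  laplacian f x - inner ℝ (gradient h x) (gradient f x)

/-- The Hessian of `f` at `x` as a bilinear form. -/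
noncomputable def hess (f : E → ℝ) (x : E) (v w : E) : ℝ :=
  iteratedFDeriv ℝ 2 f x ![v, w]

open Set Filter Topology Finset
set_option linter.unusedSectionVars false
set_option maxHeartbeats 1000000


lemma second_deriv_test {q : ℝ → ℝ} (hq : ContDiff ℝ (⊤ : ℕ∞) q) (hmax : IsLocalMax q 0) :
    deriv (deriv q) 0 ≤ 0 := by
  by_contra hpos
  push_neg at hpos
  have h1 : deriv q 0 = 0 := hmax.deriv_eq_zero
  have hq' : ContDiff ℝ ((⊤ : ℕ∞) : WithTop ℕ∞) q := hq.of_le (by simp)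
  have hdq : Differentiable ℝ (deriv q) :=
    (contDiff_infty_iff_deriv.mp hq').2.differentiable (by simp)
  have h2 : HasDerivAt (deriv q) (deriv (deriv q) 0) 0 := (hdq 0).hasDerivAt
  -- eventually deriv q t > 0 for t in 𝓝[>] 0
  have hslope := h2.hasDerivWithinAt (s := Set.Ioi (0:ℝ))
  have hev : ∀ᶠ t in 𝓝[>] (0:ℝ), 0 < deriv q t := by
    have := (hasDerivWithinAt_iff_tendsto_slope.mp hslope)
    have h3 : ∀ᶠ t in 𝓝[>] (0:ℝ), 0 < slope (deriv q) 0 t := by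
      have : Set.Ioi (0:ℝ) \ {0} = Set.Ioi 0 := by simp
      have h4 := this ▸ (hasDerivWithinAt_iff_tendsto_slope.mp hslope)
      exact h4.eventually (eventually_gt_nhds hpos)
    filter_upwards [h3, self_mem_nhdsWithin] with t ht ht0
    have : slope (deriv q) 0 t = deriv q t / t := by
      simp [slope_def_field, h1, div_eq_inv_mul]
    rw [this] at ht
    have ht0' : (0:ℝ) < t := ht0
    rcases div_pos_iff.mp ht with ⟨h, _⟩ | ⟨_, h2⟩
    · exact h
    · linarith
  obtain ⟨u, hu, hIoo⟩ := mem_nhdsGT_iff_exists_Ioo_subset.mp hev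
  obtain ⟨ε, hε, hball⟩ := Metric.eventually_nhds_iff.mp hmax
  set c := min u ε / 2 with hc
  have hu0 : (0:ℝ) < u := hu
  have hc0 : 0 < c := by positivity
  have hcu : c < u := by
    have := min_le_left u ε; simp only [hc]; linarith [lt_min_iff.mpr ⟨hu0, hε⟩, min_le_left u ε]
  have hsm : StrictMonoOn q (Set.Icc 0 c) := by
    apply strictMonoOn_of_deriv_pos (convex_Icc 0 c) (hq.continuous.continuousOn)
    intro t ht
    rw [interior_Icc] at ht
    exact hIoo ⟨ht.1, lt_trans ht.2 hcu⟩
  have hqc : q 0 < q c := hsm ⟨le_refl 0, le_of_lt hc0⟩ ⟨le_of_lt hc0, le_refl c⟩ hc0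
  have : q c ≤ q 0 := by
    apply hball
    simp only [dist_zero_right, Real.norm_eq_abs, abs_of_pos hc0, hc]
    rw [abs_of_pos (half_pos (lt_min hu0 hε))]
    linarith [min_le_right u ε]
  linarith

lemma riccati_nonpos {m : ℝ} (hm : 0 < m) {ψ : ℝ → ℝ} (hψ : Differentiable ℝ ψ)
    (h : ∀ t, ψ t ^ 2 / m ≤ deriv ψ t) : ¬ 0 < ψ 0 := by
  intro hc
  set c := ψ 0 with hcdef
  have hmono : Monotone ψ :=
    monotone_of_deriv_nonneg hψ fun t => le_trans (by positivity) (h t)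
  have hψpos : ∀ t : ℝ, 0 ≤ t → c ≤ ψ t := fun t ht => hmono ht
  set T := m / c with hT
  have hT0 : 0 < T := by positivity
  set F : ℝ → ℝ := fun t => -(ψ t)⁻¹ - t / m with hF
  have hder : ∀ t ∈ Set.Icc (0:ℝ) T, HasDerivAt F (deriv ψ t / ψ t ^ 2 - 1 / m) t := by
    intro t ht
    have hne : ψ t ≠ 0 := ne_of_gt (lt_of_lt_of_le hc (hψpos t ht.1))
    have h1 : HasDerivAt (fun t => (ψ t)⁻¹) (-(deriv ψ t) / ψ t ^ 2) t :=
      ((hψ t).hasDerivAt).inv hne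
    have h2 : HasDerivAt (fun t => t / m) (1 / m) t := by
      simpa using (hasDerivAt_id t).div_const m
    have h3 : HasDerivAt F (-(-(deriv ψ t) / ψ t ^ 2) - 1 / m) t := (h1.fun_neg).fun_sub h2
    convert h3 using 1
    ring
  have hmonoF : MonotoneOn F (Set.Icc 0 T) := by
    apply monotoneOn_of_deriv_nonneg (convex_Icc 0 T)
    · intro t ht
      exact ((hder t ht).continuousAt).continuousWithinAt
    · intro t ht
      rw [interior_Icc] at ht
      exact ((hder t ⟨le_of_lt ht.1, le_of_lt ht.2⟩).differentiableAt).differentiableWithinAt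
    · intro t ht
      rw [interior_Icc] at ht
      have ht' : t ∈ Set.Icc (0:ℝ) T := ⟨le_of_lt ht.1, le_of_lt ht.2⟩
      rw [(hder t ht').deriv]
      have hψt : c ≤ ψ t := hψpos t ht'.1
      have hψt0 : 0 < ψ t := lt_of_lt_of_le hc hψt
      have : ψ t ^ 2 / m / ψ t ^ 2 ≤ deriv ψ t / ψ t ^ 2 :=
        div_le_div_of_nonneg_right (h t) (by positivity) |>.trans_eq rfl
      have heq : ψ t ^ 2 / m / ψ t ^ 2 = 1 / m := by
        field_simp
      linarith [heq ▸ this]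
  have hF0 : F 0 ≤ F T := hmonoF ⟨le_refl 0, le_of_lt hT0⟩ ⟨le_of_lt hT0, le_refl T⟩ (le_of_lt hT0)
  have hψT : 0 < ψ T := lt_of_lt_of_le hc (hψpos T (le_of_lt hT0))
  have : F 0 = -c⁻¹ := by simp [hF, hcdef]
  have hFT : F T = -(ψ T)⁻¹ - 1 / c := by
    simp only [hF, hT]
    rw [div_right_comm, div_self (ne_of_gt hm)]
  rw [this, hFT] at hF0
  have h1 : (0:ℝ) < (ψ T)⁻¹ := by positivity
  have h2 : c⁻¹ = 1 / c := (inv_eq_one_div c)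
  rw [h2] at hF0
  linarith

lemma hasDerivAt_line (f : E → ℝ) (hf : ContDiff ℝ (⊤ : ℕ∞) f) (x v : E) (t : ℝ) :
    HasDerivAt (fun s => f (x + s • v)) (fderiv ℝ f (x + t • v) v) t := by
  have hline : HasDerivAt (fun s : ℝ => x + s • v) v t := by
    simpa using ((hasDerivAt_id t).smul_const v).const_add x
  exact ((hf.differentiable (by simp)) (x + t • v)).hasFDerivAt.comp_hasDerivAt t hline

lemma hasDerivAt_fderiv_line (f : E → ℝ) (hf : ContDiff ℝ (⊤ : ℕ∞) f) (x v : E) (t : ℝ) :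
    HasDerivAt (fun s => fderiv ℝ f (x + s • v) v)
      (iteratedFDeriv ℝ 2 f (x + t • v) ![v, v]) t := by
  have hline : HasDerivAt (fun s : ℝ => x + s • v) v t := by
    simpa using ((hasDerivAt_id t).smul_const v).const_add x
  have hF : Differentiable ℝ (fderiv ℝ f) :=
    (hf.fderiv_right (m := (⊤ : ℕ∞)) ((by simp))).differentiable (by simp)
  have h1 : HasDerivAt (fun s => fderiv ℝ f (x + s • v))
      (fderiv ℝ (fderiv ℝ f) (x + t • v) v) t :=
    (hF (x + t • v)).hasFDerivAt.comp_hasDerivAt t hline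
  have h2 := ((ContinuousLinearMap.apply ℝ ℝ v).hasFDerivAt).comp_hasDerivAt t h1
  rw [iteratedFDeriv_two_apply]
  have h3 : HasDerivAt (fun s => fderiv ℝ f (x + s • v) v)
      (fderiv ℝ (fderiv ℝ f) (x + t • v) v v) t := h2
  simpa using h3

lemma no_supersolution {ρ : ℝ} (hρ : 0 < ρ) {N : ℕ} (hrank : 1 ≤ N)
    (b : OrthonormalBasis (Fin N) ℝ E)
    (f : E → ℝ) (hf : ContDiff ℝ (⊤ : ℕ∞) f) (hfpos : ∀ x, 0 < f x)
    (hΔ : ∀ x, ∑ i, iteratedFDeriv ℝ 2 f x ![b i, b i] ≤ -ρ * f x) : False := by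
  have hN0 : (0:ℝ) < N := by exact_mod_cast hrank
  set a := Real.sqrt (ρ / (2 * N)) with hadef
  have ha : 0 < a := Real.sqrt_pos.mpr (by positivity)
  have ha2 : a ^ 2 = ρ / (2 * N) := Real.sq_sqrt (by positivity)
  set r := Real.pi / (2 * a) with hrdef
  have hr : 0 < r := by positivity
  set φ : E → ℝ := fun x => ∏ i, Real.cos (a * (inner ℝ (b i) x : ℝ)) with hφdef
  have contφ : Continuous φ := by
    apply continuous_finset_prod
    intro i _
    exact Real.continuous_cos.comp (continuous_const.mul (continuous_const.inner continuous_id))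
  set K : Set E := ⋂ i, {x : E | |(inner ℝ (b i) x : ℝ)| ≤ r} with hKdef
  have hKclosed : IsClosed K := isClosed_iInter fun i =>
    isClosed_le ((continuous_const.inner continuous_id).abs) continuous_const
  have hKsub : K ⊆ Metric.closedBall 0 (Real.sqrt N * r) := by
    intro x hx
    simp only [Metric.mem_closedBall, dist_zero_right]
    have hx' : ∀ i, |(inner ℝ (b i) x : ℝ)| ≤ r := by
      intro i; exact mem_iInter.mp hx i
    have hpar : ‖x‖ ^ 2 = ∑ i, (inner ℝ (b i) x : ℝ) ^ 2 := by
      have := b.sum_inner_mul_inner x x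
      rw [← real_inner_self_eq_norm_sq, ← this]
      congr 1; ext i; rw [real_inner_comm x (b i)]; ring
    have hle : ‖x‖ ^ 2 ≤ N * r ^ 2 := by
      rw [hpar]
      calc ∑ i, (inner ℝ (b i) x : ℝ) ^ 2 ≤ ∑ _i : Fin N, r ^ 2 := by
            apply Finset.sum_le_sum
            intro i _
            have := hx' i
            nlinarith [abs_nonneg (inner ℝ (b i) x : ℝ), sq_abs (inner ℝ (b i) x : ℝ)]
        _ = N * r ^ 2 := by simp [Finset.sum_const, Finset.card_univ, nsmul_eq_mul]
    have h2 : ‖x‖ ^ 2 ≤ (Real.sqrt N * r) ^ 2 := by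
      rw [mul_pow, Real.sq_sqrt (le_of_lt hN0)]; exact hle
    calc ‖x‖ = Real.sqrt (‖x‖ ^ 2) := (Real.sqrt_sq (norm_nonneg x)).symm
      _ ≤ Real.sqrt ((Real.sqrt N * r) ^ 2) := Real.sqrt_le_sqrt h2
      _ = Real.sqrt N * r := Real.sqrt_sq (by positivity)
  have hK : IsCompact K :=
    Metric.isCompact_of_isClosed_isBounded hKclosed (Metric.isBounded_closedBall.subset hKsub)
  have hK0 : (0:E) ∈ K := by
    simp only [hKdef, mem_iInter, mem_setOf_eq]
    intro i
    simp [inner_zero_right, le_of_lt hr]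
  set g : E → ℝ := fun x => φ x / f x with hgdef
  have contg : Continuous g := contφ.div hf.continuous fun x => ne_of_gt (hfpos x)
  obtain ⟨x₀, hx₀K, hx₀max⟩ := hK.exists_isMaxOn ⟨0, hK0⟩ contg.continuousOn
  set c := g x₀ with hcdef
  have hφ0 : φ 0 = 1 := by
    simp [hφdef, inner_zero_right]
  have hc : 0 < c := by
    have h1 : g 0 ≤ c := hx₀max hK0
    have : g 0 = 1 / f 0 := by rw [hgdef]; simp [hφ0]
    rw [this] at h1
    have := hfpos 0
    have : 0 < 1 / f 0 := by positivity
    linarith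
  have hφx₀ : φ x₀ = c * f x₀ := by
    rw [hcdef, hgdef]
    exact (div_mul_cancel₀ (φ x₀) (ne_of_gt (hfpos x₀))).symm
  have hφx₀pos : 0 < φ x₀ := by
    rw [hφx₀]; exact mul_pos hc (hfpos x₀)
  have hstrict : ∀ i, |a * (inner ℝ (b i) x₀ : ℝ)| < Real.pi / 2 := by
    intro i
    have hne : Real.cos (a * (inner ℝ (b i) x₀ : ℝ)) ≠ 0 := by
      intro hzero
      have : φ x₀ = 0 := Finset.prod_eq_zero (Finset.mem_univ i) hzero
      linarith
    have hle : |a * (inner ℝ (b i) x₀ : ℝ)| ≤ Real.pi / 2 := by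
      rw [abs_mul, abs_of_pos ha]
      have := mem_iInter.mp hx₀K i
      calc a * |(inner ℝ (b i) x₀ : ℝ)| ≤ a * r := by
            exact mul_le_mul_of_nonneg_left this (le_of_lt ha)
        _ = Real.pi / 2 := by rw [hrdef]; field_simp
    rcases lt_or_eq_of_le hle with h | h
    · exact h
    · exfalso
      apply hne
      rw [← Real.cos_abs, h, Real.cos_pi_div_two]
  set U : Set E := ⋂ i, {x : E | |a * (inner ℝ (b i) x : ℝ)| < Real.pi / 2} with hUdef
  have hUopen : IsOpen U := isOpen_iInter_of_finite fun i =>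
    isOpen_lt ((continuous_const.mul (continuous_const.inner continuous_id)).abs) continuous_const
  have hUK : U ⊆ K := by
    intro x hx
    simp only [hKdef, mem_iInter, mem_setOf_eq]
    intro i
    have hxi := mem_iInter.mp hx i
    simp only [mem_setOf_eq, abs_mul, abs_of_pos ha] at hxi
    have har : a * r = Real.pi / 2 := by rw [hrdef]; field_simp
    nlinarith
  have hUx₀ : x₀ ∈ U := mem_iInter.mpr fun i => hstrict i
  have hwK : ∀ x ∈ K, φ x - c * f x ≤ 0 := by
    intro x hx
    have h1 : g x ≤ c := hx₀max hx
    rw [hgdef] at h1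
    have h2 := hfpos x
    have := (div_le_iff₀ h2).mp h1
    linarith
  -- per-direction second derivative test
  have key : ∀ i : Fin N, -a ^ 2 * φ x₀ - c * iteratedFDeriv ℝ 2 f x₀ ![b i, b i] ≤ 0 := by
    intro i
    set xi := (inner ℝ (b i) x₀ : ℝ) with hxidef
    set A := ∏ j ∈ Finset.univ.erase i, Real.cos (a * (inner ℝ (b j) x₀ : ℝ)) with hAdef
    have hAφ : A * Real.cos (a * xi) = φ x₀ := by
      show A * Real.cos (a * xi) = ∏ j : Fin N, Real.cos (a * (inner ℝ (b j) x₀ : ℝ))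
      rw [hAdef, mul_comm]
      exact Finset.mul_prod_erase Finset.univ (fun j => Real.cos (a * (inner ℝ (b j) x₀ : ℝ))) (Finset.mem_univ i)
    have hline : ∀ t : ℝ, φ (x₀ + t • b i) = A * Real.cos (a * xi + a * t) := by
      intro t
      rw [hφdef]
      have hinner : ∀ j : Fin N, (inner ℝ (b j) (x₀ + t • b i) : ℝ)
          = (inner ℝ (b j) x₀ : ℝ) + t * (if j = i then (1:ℝ) else 0) := by
        intro j
        rw [inner_add_right, real_inner_smul_right]
        congr 1
        rw [mul_eq_mul_left_iff]
        left
        have := b.orthonormal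
        rw [orthonormal_iff_ite] at this
        exact this j i
      calc ∏ j, Real.cos (a * (inner ℝ (b j) (x₀ + t • b i) : ℝ))
          = Real.cos (a * ((inner ℝ (b i) x₀ : ℝ) + t * 1)) *
            ∏ j ∈ Finset.univ.erase i, Real.cos (a * (inner ℝ (b j) (x₀ + t • b i) : ℝ)) := by
            rw [← Finset.mul_prod_erase Finset.univ _ (Finset.mem_univ i), hinner i, if_pos rfl]
        _ = A * Real.cos (a * xi + a * t) := by
            rw [mul_comm A _]
            congr 1
            · rw [hxidef]; ring_nf
            · rw [hAdef]
              apply Finset.prod_congr rfl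
              intro j hj
              rw [hinner j, if_neg (Finset.mem_erase.mp hj).1]
              ring_nf
    set q : ℝ → ℝ := fun t => A * Real.cos (a * xi + a * t) - c * f (x₀ + t • b i) with hqdef
    have hlinec : ContDiff ℝ (⊤ : ℕ∞) (fun t : ℝ => x₀ + t • b i) :=
      contDiff_const.add (contDiff_id.smul contDiff_const)
    have hqc : ContDiff ℝ (⊤ : ℕ∞) q := by
      apply ContDiff.sub
      · exact contDiff_const.mul (Real.contDiff_cos.comp
          (contDiff_const.add (contDiff_const.mul contDiff_id)))
      · exact contDiff_const.mul (hf.comp hlinec)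
    have hqmax : IsLocalMax q 0 := by
      have hq0 : q 0 = 0 := by
        rw [hqdef]
        simp only [mul_zero, add_zero, zero_smul]
        rw [hAφ, hφx₀]
        ring
      rw [IsLocalMax, IsMaxFilter, hq0]
      have hpre : (fun t : ℝ => x₀ + t • b i) ⁻¹' U ∈ 𝓝 (0:ℝ) := by
        apply (hlinec.continuous.continuousAt).preimage_mem_nhds
        rw [show x₀ + (0:ℝ) • b i = x₀ by simp]
        exact hUopen.mem_nhds hUx₀
      filter_upwards [hpre] with t ht
      have hK' : x₀ + t • b i ∈ K := hUK ht
      have := hwK _ hK'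
      rw [hqdef]
      simp only
      rw [← hline t]
      linarith
    have htest := second_deriv_test hqc hqmax
    -- compute deriv q
    have hs : ∀ t : ℝ, HasDerivAt (fun t : ℝ => a * xi + a * t) a t := by
      intro t
      simpa using ((hasDerivAt_id t).const_mul a).const_add (a * xi)
    have hdq : deriv q = fun t => A * (-Real.sin (a * xi + a * t) * a)
        - c * fderiv ℝ f (x₀ + t • b i) (b i) := by
      funext t
      have h1 : HasDerivAt (fun t => A * Real.cos (a * xi + a * t))
          (A * (-Real.sin (a * xi + a * t) * a)) t :=
        by have := ((Real.hasDerivAt_cos (a * xi + a * t)).comp t (hs t)).const_mul A; exact this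
      have h2 : HasDerivAt (fun t => c * f (x₀ + t • b i))
          (c * fderiv ℝ f (x₀ + t • b i) (b i)) t :=
        (hasDerivAt_line f hf x₀ (b i) t).const_mul c
      exact (h1.sub h2).deriv
    have hdq2 : deriv (deriv q) 0 = (A * -a) * (Real.cos (a * xi + a * 0) * a)
        - c * iteratedFDeriv ℝ 2 f (x₀ + (0:ℝ) • b i) ![b i, b i] := by
      rw [hdq]
      have h1 : HasDerivAt (fun t : ℝ => (A * -a) * Real.sin (a * xi + a * t))
          ((A * -a) * (Real.cos (a * xi + a * 0) * a)) 0 :=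
        ((Real.hasDerivAt_sin (a * xi + a * 0)).comp (0:ℝ) (hs 0)).const_mul (A * -a)
      have heqfun : (fun t : ℝ => A * (-Real.sin (a * xi + a * t) * a))
          = fun t : ℝ => (A * -a) * Real.sin (a * xi + a * t) := by
        funext t; ring
      have h2 : HasDerivAt (fun t : ℝ => c * fderiv ℝ f (x₀ + t • b i) (b i))
          (c * iteratedFDeriv ℝ 2 f (x₀ + (0:ℝ) • b i) ![b i, b i]) 0 :=
        (hasDerivAt_fderiv_line f hf x₀ (b i) 0).const_mul c
      have h1' : HasDerivAt (fun t : ℝ => A * (-Real.sin (a * xi + a * t) * a))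
          ((A * -a) * (Real.cos (a * xi + a * 0) * a)) 0 := by
        rw [heqfun]; exact h1
      exact (h1'.sub h2).deriv
    rw [hdq2] at htest
    simp only [mul_zero, add_zero, zero_smul] at htest
    have : (A * -a) * (Real.cos (a * xi) * a) = -a ^ 2 * φ x₀ := by
      rw [← hAφ]; ring
    rw [this] at htest
    exact htest
  -- sum up
  have hsum : (N : ℝ) * (-a ^ 2 * φ x₀) - c * (∑ i, iteratedFDeriv ℝ 2 f x₀ ![b i, b i]) ≤ 0 := by
    have h1 : ∑ i : Fin N, (-a ^ 2 * φ x₀ - c * iteratedFDeriv ℝ 2 f x₀ ![b i, b i])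
        ≤ ∑ _i : Fin N, (0:ℝ) := Finset.sum_le_sum fun i _ => key i
    rw [Finset.sum_sub_distrib, Finset.sum_const, Finset.sum_const, Finset.card_univ,
      Fintype.card_fin, ← Finset.mul_sum] at h1
    simpa [nsmul_eq_mul] using h1
  have hΔ' := hΔ x₀
  have hNa : (N : ℝ) * a ^ 2 = ρ / 2 := by
    rw [ha2]; field_simp
  nlinarith [hfpos x₀, mul_le_mul_of_nonneg_left hΔ' (le_of_lt hc)]

lemma inner_gradient (f : E → ℝ) (x v : E) : (inner ℝ (gradient f x) v : ℝ) = fderiv ℝ f x v := by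
  rw [gradient, ← InnerProductSpace.toDual_apply_apply, LinearIsometryEquiv.apply_symm_apply]

theorem stmt_15 (n : ℕ) (hn : finrank ℝ E = n) (hn1 : 1 ≤ n) (k : ℕ) (hk : 1 ≤ k)
    (m ρ : ℝ) (hm : 0 < m) (hρ : 0 < ρ) :
    ¬ ∃ f h : E → ℝ, ContDiff ℝ (⊤ : ℕ∞) f ∧ ContDiff ℝ (⊤ : ℕ∞) h ∧ (∀ x, 0 < f x) ∧
      (∀ x, ∀ w : E, hess h x w w - (1 / m) * (inner ℝ (gradient h x) w : ℝ) ^ 2 ≥ 0) ∧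
      (∀ x, ρ * f x ^ 2 + f x * laplacian f x + ((k : ℝ) - 1) * ‖gradient f x‖ ^ 2
        - f x * (inner ℝ (gradient h x) (gradient f x) : ℝ) = 0) := by
  rintro ⟨f, h, hf, hh, hfpos, hhess, heq⟩
  have hgrad : ∀ x v : E, fderiv ℝ h x v = 0 := by
    intro x v
    set ψ : ℝ → ℝ := fun t => fderiv ℝ h (x + t • v) v with hψdef
    have hψd : ∀ t, HasDerivAt ψ (iteratedFDeriv ℝ 2 h (x + t • v) ![v, v]) t :=
      fun t => hasDerivAt_fderiv_line h hh x v t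
    have hψdiff : Differentiable ℝ ψ := fun t => (hψd t).differentiableAt
    have hineq : ∀ t, ψ t ^ 2 / m ≤ deriv ψ t := by
      intro t
      rw [(hψd t).deriv]
      have h0 := hhess (x + t • v) v
      rw [ge_iff_le, sub_nonneg] at h0
      have h2 : (inner ℝ (gradient h (x + t • v)) v : ℝ) = ψ t := inner_gradient h _ v
      rw [h2] at h0
      calc ψ t ^ 2 / m = 1 / m * ψ t ^ 2 := by ring
        _ ≤ hess h (x + t • v) v v := h0
        _ = iteratedFDeriv ℝ 2 h (x + t • v) ![v, v] := rfl
    have hnotpos := riccati_nonpos hm hψdiff hineq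
    have hnotneg : ¬ ψ 0 < 0 := by
      intro hneg
      set χ : ℝ → ℝ := fun t => -ψ (-t) with hχdef
      have hχd : ∀ t, HasDerivAt χ (deriv ψ (-t)) t := by
        intro t
        have h1 : HasDerivAt (fun t : ℝ => ψ (-t)) (deriv ψ (-t) * (-1)) t :=
          ((hψdiff (-t)).hasDerivAt).comp t (hasDerivAt_neg t)
        simpa using h1.fun_neg
      have hχdiff : Differentiable ℝ χ := fun t => (hχd t).differentiableAt
      have hχineq : ∀ t, χ t ^ 2 / m ≤ deriv χ t := by
        intro t
        rw [(hχd t).deriv]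
        simpa [hχdef, neg_sq] using hineq (-t)
      have hχ0 : 0 < χ 0 := by simpa [hχdef] using hneg
      exact riccati_nonpos hm hχdiff hχineq hχ0
    have hψ0 : ψ 0 = 0 := by
      rcases lt_trichotomy (ψ 0) 0 with h1 | h1 | h1
      · exact absurd h1 hnotneg
      · exact h1
      · exact absurd h1 hnotpos
    simpa [hψdef] using hψ0
  have hinner0 : ∀ x : E, (inner ℝ (gradient h x) (gradient f x) : ℝ) = 0 := by
    intro x
    rw [inner_gradient]
    exact hgrad x _
  have hΔ : ∀ x, laplacian f x ≤ -ρ * f x := by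
    intro x
    have h0 := heq x
    rw [hinner0 x] at h0
    have hk1 : (1:ℝ) ≤ (k:ℝ) := by exact_mod_cast hk
    have hn2 : 0 ≤ ((k:ℝ) - 1) * ‖gradient f x‖ ^ 2 :=
      mul_nonneg (by linarith) (sq_nonneg _)
    have hfx := hfpos x
    nlinarith [sq_nonneg (f x)]
  exact no_supersolution hρ (by rw [hn]; exact hn1) (stdOrthonormalBasis ℝ E) f hf hfpos
    (fun x => hΔ x)
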